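/- arXiv:2112.06900 — 4 statements merged into one kernel-verified Lean document; each statement's English description precedes it below -/
import Mathlib

section
/- For every θ ∈ [0, π/2] and every C ∈ [0, 1], one has sin²θ·|1 − 2C| + sin(2θ)·√C·√(1 − C) ≤ sin θ. -/
/-!
With `sin 2θ = 2 sin θ cos θ`, the left-hand side is `sin θ` times the inner product of the unit
vectors `(sin θ, cos θ)` and `(|1 - 2C|, 2√C√(1 - C))`, which is at most `1` by Cauchy–Schwarz.
-/

open Real

lemma mul_add_mul_le_one_of_sq_add_sq_eq_one {x y u v : ℝ} (hxy : x ^ 2 + y ^ 2 = 1)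
    (huv : u ^ 2 + v ^ 2 = 1) : x * u + y * v ≤ 1 := by
  nlinarith [sq_nonneg (x - u), sq_nonneg (y - v)]

lemma sq_abs_one_sub_two_mul_add_sq_two_mul_sqrt_mul_sqrt {C : ℝ} (h0 : 0 ≤ C) (h1 : C ≤ 1) :
    |1 - 2 * C| ^ 2 + (2 * (√C * √(1 - C))) ^ 2 = 1 := by
  rw [sq_abs, mul_pow, mul_pow, sq_sqrt h0, sq_sqrt (by linarith)]
  ring

lemma sin_sq_mul_add_sin_two_mul_mul_le_sin {θ a b : ℝ} (hθ : 0 ≤ sin θ)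
    (hab : a ^ 2 + (2 * b) ^ 2 = 1) : sin θ ^ 2 * a + sin (2 * θ) * b ≤ sin θ :=
  calc sin θ ^ 2 * a + sin (2 * θ) * b = sin θ * (sin θ * a + cos θ * (2 * b)) := by
        rw [sin_two_mul]; ring
    _ ≤ sin θ * 1 :=
        mul_le_mul_of_nonneg_left
          (mul_add_mul_le_one_of_sq_add_sq_eq_one (sin_sq_add_cos_sq θ) hab) hθ
    _ = sin θ := mul_one _

/-- For every `θ ∈ [0, π/2]` and `C ∈ [0, 1]`,
`sin²θ |1 - 2C| + sin(2θ) √C √(1 - C) ≤ sin θ`. -/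
theorem g_le_sin
    (θ C : ℝ) (hθ : θ ∈ Set.Icc 0 (π / 2)) (hC : C ∈ Set.Icc (0 : ℝ) 1) :
    Real.sin θ ^ 2 * |1 - 2 * C|
      + Real.sin (2 * θ) * Real.sqrt C * Real.sqrt (1 - C)
      ≤ Real.sin θ := by
  have hsin : 0 ≤ sin θ := sin_nonneg_of_nonneg_of_le_pi hθ.1 (by linarith [hθ.2, pi_pos])
  rw [mul_assoc (sin (2 * θ))]
  exact sin_sq_mul_add_sin_two_mul_mul_le_sin hsin
    (sq_abs_one_sub_two_mul_add_sq_two_mul_sqrt_mul_sqrt hC.1 hC.2)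
end

section
/- For every triple ψ₁, ψ₂, ψ₃ of unit vectors in a complex inner product space E, one has | |⟨ψ₁, ψ₂⟩|² − |⟨ψ₁, ψ₃⟩|² | ≤ sin(arccos|⟨ψ₂, ψ₃⟩|), i.e., |F(ψ₁, ψ₂) − F(ψ₁, ψ₃)| ≤ √(1 − |⟨ψ₂, ψ₃⟩|²). -/
open scoped InnerProductSpace
open Real

/-!
Measure the distance between unit vectors by the Bures angle `θ(x, y) = arccos |⟨x, y⟩|`. Writing
`u' = u - ⟨v, u⟩ v` and `w' = w - ⟨v, w⟩ v`, one has `⟨w, u⟩ = ⟨w, v⟩⟨v, u⟩ + ⟨w', u'⟩`, and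
Cauchy–Schwarz on the second term gives `|⟨w, u⟩| ≤ cos(θ(v, w) - θ(v, u))`: the Bures angle
satisfies the triangle inequality. With `α = θ(ψ₁, ψ₂)`, `β = θ(ψ₁, ψ₃)` and `γ = θ(ψ₂, ψ₃)` we
thus have `|α - β| ≤ γ ≤ π/2`, and `cos² α - cos² β = sin (α + β) sin (β - α)` is at most
`sin γ` in absolute value.
-/

section

variable {𝕜 E : Type*} [RCLike 𝕜] [NormedAddCommGroup E] [InnerProductSpace 𝕜 E]

variable (𝕜) in
noncomputable def buresAngle (x y : E) : ℝ := arccos ‖⟪x, y⟫_𝕜‖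

lemma buresAngle_le_pi_div_two (x y : E) : buresAngle 𝕜 x y ≤ π / 2 :=
  arccos_le_pi_div_two.mpr (norm_nonneg _)

lemma cos_buresAngle {x y : E} (hx : ‖x‖ = 1) (hy : ‖y‖ = 1) :
    cos (buresAngle 𝕜 x y) = ‖⟪x, y⟫_𝕜‖ :=
  cos_arccos (by linarith [norm_nonneg ⟪x, y⟫_𝕜])
    (by simpa [hx, hy] using norm_inner_le_norm (𝕜 := 𝕜) x y)

lemma norm_sub_inner_smul_sq {v : E} (hv : ‖v‖ = 1) (u : E) :
    ‖u - ⟪v, u⟫_𝕜 • v‖ ^ 2 = ‖u‖ ^ 2 - ‖⟪v, u⟫_𝕜‖ ^ 2 := by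
  rw [@norm_sub_sq 𝕜, inner_smul_right, norm_smul, hv, ← inner_conj_symm, RCLike.conj_mul,
    RCLike.norm_conj]
  norm_cast
  ring

lemma sin_buresAngle {u v : E} (hu : ‖u‖ = 1) (hv : ‖v‖ = 1) :
    sin (buresAngle 𝕜 v u) = ‖u - ⟪v, u⟫_𝕜 • v‖ := by
  rw [buresAngle, sin_arccos, ← sqrt_sq (norm_nonneg (u - _)), norm_sub_inner_smul_sq hv, hu,
    one_pow]

lemma norm_inner_sub_inner_mul_inner_le {v : E} (hv : ‖v‖ = 1) (u w : E) :
    ‖⟪w, u⟫_𝕜 - ⟪w, v⟫_𝕜 * ⟪v, u⟫_𝕜‖ ≤ ‖w - ⟪v, w⟫_𝕜 • v‖ * ‖u - ⟪v, u⟫_𝕜 • v‖ := by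
  have hvv : ⟪v, v⟫_𝕜 = 1 := by rw [inner_self_eq_norm_sq_to_K, hv]; norm_num
  have hinner : ⟪w - ⟪v, w⟫_𝕜 • v, u - ⟪v, u⟫_𝕜 • v⟫_𝕜 = ⟪w, u⟫_𝕜 - ⟪w, v⟫_𝕜 * ⟪v, u⟫_𝕜 := by
    simp only [inner_sub_left, inner_sub_right, inner_smul_left, inner_smul_right, hvv,
      inner_conj_symm]
    ring
  exact hinner ▸ norm_inner_le_norm _ _

lemma abs_buresAngle_sub_le {u v w : E} (hu : ‖u‖ = 1) (hv : ‖v‖ = 1) (hw : ‖w‖ = 1) :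
    |buresAngle 𝕜 v w - buresAngle 𝕜 v u| ≤ buresAngle 𝕜 w u := by
  have hcos : ‖⟪w, u⟫_𝕜‖ ≤ cos (buresAngle 𝕜 v w - buresAngle 𝕜 v u) := by
    rw [cos_sub, cos_buresAngle hv hw, cos_buresAngle hv hu, sin_buresAngle hw hv,
      sin_buresAngle hu hv, norm_inner_symm v w, ← norm_mul]
    calc ‖⟪w, u⟫_𝕜‖ ≤ ‖⟪w, v⟫_𝕜 * ⟪v, u⟫_𝕜‖ + ‖⟪w, u⟫_𝕜 - ⟪w, v⟫_𝕜 * ⟪v, u⟫_𝕜‖ :=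
          norm_le_insert' _ _
      _ ≤ _ := by gcongr; exact norm_inner_sub_inner_mul_inner_le hv u w
  have hbound : |buresAngle 𝕜 v w - buresAngle 𝕜 v u| ≤ π :=
    abs_sub_le_of_nonneg_of_le (arccos_nonneg _) (arccos_le_pi _) (arccos_nonneg _)
      (arccos_le_pi _)
  calc |buresAngle 𝕜 v w - buresAngle 𝕜 v u|
      = arccos (cos |buresAngle 𝕜 v w - buresAngle 𝕜 v u|) :=
        (arccos_cos (abs_nonneg _) hbound).symm
    _ ≤ buresAngle 𝕜 w u := arccos_le_arccos (by rwa [cos_abs])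

end

lemma abs_cos_sq_sub_cos_sq_le_sin {α β γ : ℝ} (h : |α - β| ≤ γ) (hγ : γ ≤ π / 2) :
    |cos α ^ 2 - cos β ^ 2| ≤ sin γ := by
  have hsq : cos α ^ 2 - cos β ^ 2 = sin (α + β) * sin (β - α) := by
    rw [sin_add, sin_sub]; nlinarith [sin_sq_add_cos_sq α, sin_sq_add_cos_sq β]
  have hγ' : |β - α| ≤ π := by rw [abs_sub_comm]; linarith [pi_pos]
  calc |cos α ^ 2 - cos β ^ 2| = |sin (α + β)| * |sin (β - α)| := by rw [hsq, abs_mul]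
    _ ≤ 1 * sin |β - α| := by
        rw [abs_sin_eq_sin_abs_of_abs_le_pi hγ']
        gcongr
        · exact sin_nonneg_of_nonneg_of_le_pi (abs_nonneg _) hγ'
        · exact abs_sin_le_one _
    _ ≤ sin γ := by
        rw [one_mul, abs_sub_comm]
        exact sin_le_sin_of_le_of_le_pi_div_two (by linarith [pi_pos, abs_nonneg (α - β)]) hγ h

/-- For unit vectors `ψ₁, ψ₂, ψ₃`, the fidelities satisfy
`|F(ψ₁, ψ₂) - F(ψ₁, ψ₃)| ≤ sin(arccos |⟨ψ₂, ψ₃⟩|)`. -/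
theorem fidelity_diff_le_sin_arccos
    {E : Type*} [NormedAddCommGroup E] [InnerProductSpace ℂ E]
    (ψ₁ ψ₂ ψ₃ : E) (h₁ : ‖ψ₁‖ = 1) (h₂ : ‖ψ₂‖ = 1) (h₃ : ‖ψ₃‖ = 1) :
    |‖⟪ψ₁, ψ₂⟫_ℂ‖ ^ 2 - ‖⟪ψ₁, ψ₃⟫_ℂ‖ ^ 2|
      ≤ Real.sin (Real.arccos (‖⟪ψ₂, ψ₃⟫_ℂ‖)) := by
  have h := abs_cos_sq_sub_cos_sq_le_sin (abs_buresAngle_sub_le (𝕜 := ℂ) h₃ h₁ h₂)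
    (buresAngle_le_pi_div_two ψ₂ ψ₃)
  rwa [cos_buresAngle h₁ h₂, cos_buresAngle h₁ h₃] at h
end

section
/- Let Φ₀, Ψ, Φ be unit vectors in a complex inner product space E, and let R ≥ 0 be a real number with arccos|⟨Φ₀, Ψ⟩| ≤ R. Then | |⟨Φ, Ψ⟩|² − |⟨Φ₀, Φ⟩|² | ≤ sin(min(R, π/2)). -/
open scoped InnerProductSpace
open Real

/-
Split `Φ` and `Ψ` along `Φ₀` and its orthogonal complement. Writing `b = |⟨Φ₀, Φ⟩|`,
`c = |⟨Φ₀, Ψ⟩|`, `u = √(1 - b²)` and `t = √(1 - c²)`, Cauchy–Schwarz on the orthogonal parts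
gives `|⟨Φ, Ψ⟩| ≤ b c + u t`, and `(b c + u t)² - b² = t (t (u² - b²) + 2 b c u) ≤ t`, the last
factor being an inner product of the unit vectors `(t, c)` and `(u² - b², 2 b u)`. Exchanging `Φ₀` and `Ψ` gives
the other sign, and `t = sin (arccos c)` with `arccos c ≤ min R (π / 2)`.
-/

theorem sq_mul_add_mul_sub_sq_le {b c t u : ℝ} (ht : 0 ≤ t) (hbu : b ^ 2 + u ^ 2 = 1)
    (hct : c ^ 2 + t ^ 2 = 1) : (b * c + u * t) ^ 2 - b ^ 2 ≤ t := by
  have hfactor : (b * c + u * t) ^ 2 - b ^ 2 = t * (t * (u ^ 2 - b ^ 2) + 2 * b * c * u) := by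
    linear_combination (b ^ 2) * hct
  have hunit : t * (u ^ 2 - b ^ 2) + 2 * b * c * u ≤ 1 := by
    nlinarith [sq_nonneg (t - (u ^ 2 - b ^ 2)), sq_nonneg (c - 2 * b * u)]
  rw [hfactor]
  simpa using mul_le_mul_of_nonneg_left hunit ht

section

variable {𝕜 E : Type*} [RCLike 𝕜] [NormedAddCommGroup E] [InnerProductSpace 𝕜 E]

local notation "⟪" x ", " y "⟫" => inner 𝕜 x y

theorem inner_sub_inner_smul_sub_inner_smul {e : E} (he : ‖e‖ = 1) (x y : E) :
    ⟪x - ⟪e, x⟫ • e, y - ⟪e, y⟫ • e⟫ = ⟪x, y⟫ - ⟪x, e⟫ * ⟪e, y⟫ := by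
  have hee : ⟪e, e⟫ = 1 := by simp [inner_self_eq_norm_sq_to_K, he]
  simp only [inner_sub_left, inner_sub_right, inner_smul_left, inner_smul_right, hee,
    inner_conj_symm]
  ring

theorem norm_sub_inner_smul_sq_s6 {e : E} (he : ‖e‖ = 1) (x : E) :
    ‖x - ⟪e, x⟫ • e‖ ^ 2 = ‖x‖ ^ 2 - ‖⟪e, x⟫‖ ^ 2 := by
  have h := inner_sub_inner_smul_sub_inner_smul (𝕜 := 𝕜) he x x
  rw [← inner_conj_symm x e, RCLike.conj_mul, inner_self_eq_norm_sq_to_K,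
    inner_self_eq_norm_sq_to_K] at h
  exact_mod_cast h

theorem norm_inner_le_of_norm_eq_one {e : E} (he : ‖e‖ = 1) (x y : E) :
    ‖⟪x, y⟫‖ ≤ ‖⟪e, x⟫‖ * ‖⟪e, y⟫‖
      + √(‖x‖ ^ 2 - ‖⟪e, x⟫‖ ^ 2) * √(‖y‖ ^ 2 - ‖⟪e, y⟫‖ ^ 2) := by
  have hsplit : ⟪x, y⟫ = ⟪x, e⟫ * ⟪e, y⟫ + ⟪x - ⟪e, x⟫ • e, y - ⟪e, y⟫ • e⟫ := by
    rw [inner_sub_inner_smul_sub_inner_smul he]; ring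
  rw [hsplit, ← norm_sub_inner_smul_sq_s6 (𝕜 := 𝕜) he x, ← norm_sub_inner_smul_sq_s6 (𝕜 := 𝕜) he y,
    sqrt_sq (norm_nonneg _), sqrt_sq (norm_nonneg _), norm_inner_symm (𝕜 := 𝕜) e x, ← norm_mul]
  exact (norm_add_le _ _).trans (add_le_add le_rfl (norm_inner_le_norm _ _))

theorem sq_norm_inner_sub_sq_norm_inner_le {Φ₀ Ψ Φ : E} (hΦ₀ : ‖Φ₀‖ = 1) (hΨ : ‖Ψ‖ = 1)
    (hΦ : ‖Φ‖ = 1) : ‖⟪Φ, Ψ⟫‖ ^ 2 - ‖⟪Φ₀, Φ⟫‖ ^ 2 ≤ √(1 - ‖⟪Φ₀, Ψ⟫‖ ^ 2) := by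
  have hle_one : ∀ {x : E}, ‖x‖ = 1 → ‖⟪Φ₀, x⟫‖ ^ 2 ≤ 1 := fun {x} hx =>
    pow_le_one₀ (norm_nonneg _) (by simpa [hΦ₀, hx] using norm_inner_le_norm (𝕜 := 𝕜) Φ₀ x)
  have hbound := norm_inner_le_of_norm_eq_one (𝕜 := 𝕜) hΦ₀ Φ Ψ
  rw [hΦ, hΨ, one_pow] at hbound
  refine (sub_le_sub_right (pow_le_pow_left₀ (norm_nonneg _) hbound 2) _).trans ?_
  exact sq_mul_add_mul_sub_sq_le (sqrt_nonneg _) (by rw [sq_sqrt (sub_nonneg.2 (hle_one hΦ))]; ring)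
    (by rw [sq_sqrt (sub_nonneg.2 (hle_one hΨ))]; ring)

theorem abs_sq_norm_inner_sub_sq_norm_inner_le {Φ₀ Ψ Φ : E} (hΦ₀ : ‖Φ₀‖ = 1) (hΨ : ‖Ψ‖ = 1)
    (hΦ : ‖Φ‖ = 1) : |‖⟪Φ, Ψ⟫‖ ^ 2 - ‖⟪Φ₀, Φ⟫‖ ^ 2| ≤ √(1 - ‖⟪Φ₀, Ψ⟫‖ ^ 2) := by
  refine abs_sub_le_iff.2 ⟨sq_norm_inner_sub_sq_norm_inner_le hΦ₀ hΨ hΦ, ?_⟩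
  have h := sq_norm_inner_sub_sq_norm_inner_le (𝕜 := 𝕜) hΨ hΦ₀ hΦ
  rwa [norm_inner_symm Φ Φ₀, norm_inner_symm Ψ Φ, norm_inner_symm Ψ Φ₀] at h

end

theorem fidelity_diff_le_sin_min_general
    {E : Type*} [NormedAddCommGroup E] [InnerProductSpace ℂ E]
    (Φ₀ Ψ Φ : E) (hΦ₀ : ‖Φ₀‖ = 1) (hΨ : ‖Ψ‖ = 1) (hΦ : ‖Φ‖ = 1)
    (R : ℝ) (hRle : Real.arccos (‖⟪Φ₀, Ψ⟫_ℂ‖) ≤ R) :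
    |‖⟪Φ, Ψ⟫_ℂ‖ ^ 2 - ‖⟪Φ₀, Φ⟫_ℂ‖ ^ 2|
      ≤ Real.sin (min R (π / 2)) := by
  calc |‖⟪Φ, Ψ⟫_ℂ‖ ^ 2 - ‖⟪Φ₀, Φ⟫_ℂ‖ ^ 2|
      ≤ √(1 - ‖⟪Φ₀, Ψ⟫_ℂ‖ ^ 2) := abs_sq_norm_inner_sub_sq_norm_inner_le hΦ₀ hΨ hΦ
    _ = sin (arccos ‖⟪Φ₀, Ψ⟫_ℂ‖) := (sin_arccos _).symm
    _ ≤ sin (min R (π / 2)) :=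
      sin_le_sin_of_le_of_le_pi_div_two (by linarith [arccos_nonneg ‖⟪Φ₀, Ψ⟫_ℂ‖, pi_pos])
        (min_le_right _ _) (le_min hRle (arccos_le_pi_div_two.2 (norm_nonneg _)))

/-- First improved inequality: for unit vectors `Φ₀, Ψ, Φ`
and `R ≥ 0` with `arccos |⟨Φ₀, Ψ⟩| ≤ R`, one has
`| |⟨Φ, Ψ⟩|² - |⟨Φ₀, Φ⟩|² | ≤ sin (min R (π/2))`. -/
theorem fidelity_diff_le_sin_min
    {E : Type*} [NormedAddCommGroup E] [InnerProductSpace ℂ E]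
    (Φ₀ Ψ Φ : E) (hΦ₀ : ‖Φ₀‖ = 1) (hΨ : ‖Ψ‖ = 1) (hΦ : ‖Φ‖ = 1)
    (R : ℝ) (hR : 0 ≤ R) (hRle : Real.arccos (‖⟪Φ₀, Ψ⟫_ℂ‖) ≤ R) :
    |‖⟪Φ, Ψ⟫_ℂ‖ ^ 2 - ‖⟪Φ₀, Φ⟫_ℂ‖ ^ 2|
      ≤ Real.sin (min R (π / 2)) :=
  fidelity_diff_le_sin_min_general Φ₀ Ψ Φ hΦ₀ hΨ hΦ R hRle
end

section
/- For every triple ψ₁, ψ₂, ψ₃ of unit vectors in a complex inner product space E, the Bures angles satisfy the triangle inequality arccos|⟨ψ₂, ψ₃⟩| ≤ arccos|⟨ψ₁, ψ₂⟩| + arccos|⟨ψ₁, ψ₃⟩|. -/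
open scoped InnerProductSpace
open Real

/-!
Multiplying `y` and `z` by unit phases makes `⟪x, y⟫` and `⟪x, z⟫` nonnegative reals. The Bures
angles from `x` then become angles of the underlying real inner product space (with
`⟪u, v⟫_ℝ = re ⟪u, v⟫_ℂ`), while the Bures angle between `y` and `z` is unchanged by the phases and
bounded by their real angle, since `re w ≤ ‖w‖`. The triangle inequality for real angles concludes.
-/

namespace InnerProductGeometry

variable {E : Type*} [NormedAddCommGroup E] [InnerProductSpace ℂ E]

noncomputable def buresAngle (x y : E) : ℝ :=
  arccos (‖⟪x, y⟫_ℂ‖ / (‖x‖ * ‖y‖))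

theorem buresAngle_of_norm_eq_one {x y : E} (hx : ‖x‖ = 1) (hy : ‖y‖ = 1) :
    buresAngle x y = arccos ‖⟪x, y⟫_ℂ‖ := by
  rw [buresAngle, hx, hy, mul_one, div_one]

theorem buresAngle_smul_left {c : ℂ} (hc : c ≠ 0) (x y : E) :
    buresAngle (c • x) y = buresAngle x y := by
  rw [buresAngle, buresAngle, inner_smul_left, norm_smul, norm_mul, Complex.norm_conj, mul_assoc,
    mul_div_mul_left _ _ (norm_ne_zero_iff.mpr hc)]

theorem buresAngle_smul_right {c : ℂ} (hc : c ≠ 0) (x y : E) :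
    buresAngle x (c • y) = buresAngle x y := by
  rw [buresAngle, buresAngle, inner_smul_right, norm_smul, norm_mul, mul_left_comm,
    mul_div_mul_left _ _ (norm_ne_zero_iff.mpr hc)]

attribute [local instance] InnerProductSpace.complexToReal

theorem buresAngle_le_angle (x y : E) : buresAngle x y ≤ angle x y :=
  arccos_le_arccos <| div_le_div_of_nonneg_right (Complex.re_le_norm _) (by positivity)

theorem exists_angle_smul_eq_buresAngle (x y : E) :
    ∃ ω : ℂ, ω ≠ 0 ∧ angle x (ω • y) = buresAngle x y := by
  obtain ⟨ω, hω, hωxy⟩ := Complex.exists_norm_eq_mul_self ⟪x, y⟫_ℂ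
  refine ⟨ω, norm_ne_zero_iff.mp (by rw [hω]; exact one_ne_zero), ?_⟩
  rw [angle, buresAngle, real_inner_eq_re_inner ℂ, inner_smul_right, ← hωxy, norm_smul, hω,
    one_mul, RCLike.re_to_complex, Complex.ofReal_re]

theorem buresAngle_le_buresAngle_add_buresAngle (x y z : E) :
    buresAngle y z ≤ buresAngle x y + buresAngle x z := by
  obtain ⟨ω, hω, hxy⟩ := exists_angle_smul_eq_buresAngle x y
  obtain ⟨ω', hω', hxz⟩ := exists_angle_smul_eq_buresAngle x z
  calc buresAngle y z = buresAngle (ω • y) (ω' • z) := by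
        rw [buresAngle_smul_left hω, buresAngle_smul_right hω']
    _ ≤ angle (ω • y) (ω' • z) := buresAngle_le_angle _ _
    _ ≤ angle (ω • y) x + angle x (ω' • z) := angle_le_angle_add_angle _ _ _
    _ = buresAngle x y + buresAngle x z := by rw [angle_comm, hxy, hxz]

end InnerProductGeometry

open InnerProductGeometry in
/-- Triangle inequality for Bures angles: for unit vectors
`ψ₁, ψ₂, ψ₃`, `arccos |⟨ψ₂, ψ₃⟩| ≤ arccos |⟨ψ₁, ψ₂⟩| + arccos |⟨ψ₁, ψ₃⟩|`. -/
theorem bures_angle_triangle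
    {E : Type*} [NormedAddCommGroup E] [InnerProductSpace ℂ E]
    (ψ₁ ψ₂ ψ₃ : E) (h₁ : ‖ψ₁‖ = 1) (h₂ : ‖ψ₂‖ = 1) (h₃ : ‖ψ₃‖ = 1) :
    Real.arccos ‖⟪ψ₂, ψ₃⟫_ℂ‖
      ≤ Real.arccos ‖⟪ψ₁, ψ₂⟫_ℂ‖
        + Real.arccos ‖⟪ψ₁, ψ₃⟫_ℂ‖ := by
  simpa only [buresAngle_of_norm_eq_one, *] using buresAngle_le_buresAngle_add_buresAngle ψ₁ ψ₂ ψ₃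
end
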